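/- arXiv:1611.08895 — 4 statements merged into one kernel-verified Lean document; each statement's English description precedes it below -/
import Mathlib

section
/- Let n ≥ 1 and let T be the n×n symmetric tridiagonal Toeplitz matrix with diagonal a and off-diagonals b, where b ≠ 0 and |a| > 2|b|. Then T is invertible and its inverse is given entrywise by (T^{-1})_{ij} = (−1)^{i+j} (1/b) · U_{i−1}(a/(2b)) U_{n−j}(a/(2b)) / U_n(a/(2b)) if i ≤ j, and (T^{-1})_{ij} = (−1)^{i+j} (1/b) · U_{j−1}(a/(2b)) U_{n−i}(a/(2b)) / U_n(a/(2b)) if i > j, where U_m denotes the m-th Chebyshev polynomial of the second kind evaluated over ℝ. -/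
/-!
The inverse is the discrete Green's function of the recurrence
`b y (m - 1) + a y m + b y (m + 1) = 0`. If `p` solves it with `p (-1) = 0` and `q` with
`q n = 0`, then `p (min i k) * q (max i k) / (b W)`, where `W` is their (constant) Casoratian,
is a right inverse of `T`: off the diagonal a row of `T` only sees one of the two solutions,
and on the diagonal it produces `b W`. For `x = a / (2b)` the signed Chebyshev sequences
`(-1)^m U_m(x)` and `(-1)^m U_(n-1-m)(x)` are such solutions, with `W = U_n(x)`, which is
nonzero because all roots of `U_n` lie in `[-1, 1]`.
-/

/-- The `n × n` symmetric tridiagonal Toeplitz matrix with diagonal `a` and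
off-diagonals `b` (0-based `Fin n` indexing of the 1-based matrix). -/
def tridiagToeplitz (n : ℕ) (a b : ℝ) : Matrix (Fin n) (Fin n) ℝ :=
  Matrix.of fun i j =>
    if (i : ℕ) = (j : ℕ) then a
    else if (i : ℕ) + 1 = (j : ℕ) ∨ (j : ℕ) + 1 = (i : ℕ) then b
    else 0

open Polynomial Polynomial.Chebyshev Matrix Finset

section ThreeTermRecurrence

variable {K : Type*} [Field K] (a b : K)

def IsThreeTermSolution (p : ℤ → K) : Prop :=
  ∀ m, b * p (m - 1) + a * p m + b * p (m + 1) = 0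

def casoratian (p q : ℤ → K) (m : ℤ) : K :=
  p m * q (m + 1) - p (m + 1) * q m

def greenKernel (p q : ℤ → K) (i k : ℤ) : K :=
  p (min i k) * q (max i k)

variable {a b} {p q : ℤ → K}

theorem casoratian_add_one (hb : b ≠ 0) (hp : IsThreeTermSolution a b p)
    (hq : IsThreeTermSolution a b q) (m : ℤ) :
    casoratian p q (m + 1) = casoratian p q m := by
  have hp' := hp (m + 1)
  have hq' := hq (m + 1)
  rw [add_sub_cancel_right] at hp' hq'
  refine mul_left_cancel₀ hb ?_
  unfold casoratian
  linear_combination p (m + 1) * hq' - q (m + 1) * hp'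

theorem casoratian_eq (hb : b ≠ 0) (hp : IsThreeTermSolution a b p)
    (hq : IsThreeTermSolution a b q) (m m' : ℤ) :
    casoratian p q m = casoratian p q m' := by
  suffices h : ∀ m, casoratian p q m = casoratian p q 0 by rw [h m, h m']
  intro m
  induction m using Int.induction_on with
  | zero => rfl
  | succ m ih => rw [casoratian_add_one hb hp hq, ih]
  | pred m ih => rw [← ih, ← casoratian_add_one hb hp hq, sub_add_cancel]

theorem threeTerm_greenKernel (hp : IsThreeTermSolution a b p)
    (hq : IsThreeTermSolution a b q) (i k : ℤ) :
    b * greenKernel p q (i - 1) k + a * greenKernel p q i k + b * greenKernel p q (i + 1) k =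
      if i = k then b * casoratian p q k else 0 := by
  simp only [greenKernel]
  rcases lt_trichotomy i k with h | rfl | h
  · rw [if_neg h.ne, min_eq_left (by omega), min_eq_left h.le, min_eq_left (by omega),
      max_eq_right (by omega), max_eq_right h.le, max_eq_right (by omega)]
    linear_combination q k * hp i
  · rw [if_pos rfl, min_eq_left (by omega), max_eq_right (by omega), min_self, max_self,
      min_eq_right (by omega), max_eq_left (by omega), casoratian]
    linear_combination q i * hp i
  · rw [if_neg h.ne', min_eq_right (by omega), min_eq_right h.le, min_eq_right (by omega),
      max_eq_left (by omega), max_eq_left h.le, max_eq_left (by omega)]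
    linear_combination p k * hq i

theorem isThreeTermSolution_negOnePow_mul {x : K} (ha : a = 2 * b * x)
    {r : ℤ → K} (hr : ∀ m, r (m - 1) + r (m + 1) = 2 * x * r m) :
    IsThreeTermSolution a b fun m => (-1) ^ m * r m := by
  intro m
  beta_reduce
  rw [zpow_sub_one₀ (by norm_num), zpow_add_one₀ (by norm_num), ha]
  linear_combination (-(-1) ^ m * b) * hr m

end ThreeTermRecurrence

theorem tridiagToeplitz_mulVec_apply (n : ℕ) (a b : ℝ) {g : ℤ → ℝ} (hg₀ : g (-1) = 0)
    (hgn : g n = 0) (i : Fin n) :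
    (tridiagToeplitz n a b *ᵥ fun j => g j) i = b * g (i - 1) + a * g i + b * g (i + 1) := by
  set e : ℕ → ℝ := fun j =>
    if (i : ℕ) = j then a else if (i : ℕ) + 1 = j ∨ j + 1 = i then b else 0
  have hentry (j : ℕ) : e j * g j = (if j = i then a * g i else 0) +
      (if j = i + 1 then b * g (i + 1) else 0) + (if j + 1 = i then b * g (i - 1) else 0) := by
    simp only [e]
    split_ifs <;> (try simp only [zero_mul, add_zero, zero_add]) <;>
      first | omega | (congr 2; omega)
  have hup : (if (i : ℕ) + 1 ∈ range n then b * g (i + 1) else 0) = b * g (i + 1) := by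
    split_ifs with h
    · rfl
    · rw [show (i : ℤ) + 1 = n by simp at h; omega, hgn, mul_zero]
  have hdown :
      ∑ j ∈ range n, (if j + 1 = (i : ℕ) then b * g (i - 1) else 0) = b * g (i - 1) := by
    rcases i with ⟨_ | m, hm⟩
    · simp [hg₀]
    · simp [Nat.lt_of_succ_lt hm]
  calc (tridiagToeplitz n a b *ᵥ fun j => g j) i = ∑ j ∈ range n, e j * g j :=
        Fin.sum_univ_eq_sum_range (fun j => e j * g j) n
    _ = _ := by
      rw [sum_congr rfl fun j _ => hentry j, sum_add_distrib, sum_add_distrib, sum_ite_eq',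
        sum_ite_eq', if_pos (mem_range.2 i.2), hup, hdown]
      ring

theorem tridiagToeplitz_mul_greenKernel {n : ℕ} {a b : ℝ} (hb : b ≠ 0) {p q : ℤ → ℝ}
    (hp : IsThreeTermSolution a b p) (hq : IsThreeTermSolution a b q) (hp₀ : p (-1) = 0)
    (hqn : q n = 0) (hC : casoratian p q (-1) ≠ 0) :
    tridiagToeplitz n a b * of (fun i k : Fin n => greenKernel p q i k / (b * casoratian p q (-1)))
      = 1 := by
  ext i k
  set c := b * casoratian p q (-1)
  have hg₀ : greenKernel p q (-1) k / c = 0 := by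
    rw [greenKernel, min_eq_left (by omega), hp₀, zero_mul, zero_div]
  have hgn : greenKernel p q n k / c = 0 := by
    rw [greenKernel, max_eq_left (by omega), hqn, mul_zero, zero_div]
  refine (tridiagToeplitz_mulVec_apply n a b (g := fun j => greenKernel p q j k / c) hg₀ hgn
    i).trans ?_
  rw [mul_div_assoc', mul_div_assoc', mul_div_assoc', ← add_div, ← add_div,
    threeTerm_greenKernel hp hq, one_apply]
  by_cases hik : i = k
  · subst hik
    rw [if_pos rfl, if_pos rfl, casoratian_eq hb hp hq _ (-1),
      div_self (mul_ne_zero hb hC)]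
  · rw [if_neg (by simpa [Fin.ext_iff] using hik), if_neg hik, zero_div]

theorem eval_U_sub_one_add_eval_U_add_one {R : Type*} [CommRing R] (x : R) (m : ℤ) :
    (U R (m - 1)).eval x + (U R (m + 1)).eval x = 2 * x * (U R m).eval x := by
  rw [U_add_one, eval_sub, eval_mul, eval_mul, eval_X, eval_ofNat]
  ring

theorem eval_U_real_ne_zero {x : ℝ} (hx : 1 < |x|) (n : ℕ) : (U ℝ n).eval x ≠ 0 := by
  intro h
  have hroot : x ∈ (U ℝ n).roots := (mem_roots (U_ne_zero ℝ n (by omega))).2 h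
  rw [roots_U_real, mem_val] at hroot
  obtain ⟨k, -, rfl⟩ := mem_image.1 hroot
  exact hx.not_ge (Real.abs_cos_le_one _)

theorem tridiagToeplitz_mul_chebyshev {n : ℕ} {a b x : ℝ} (hb : b ≠ 0) (ha : a = 2 * b * x)
    (hx : 1 < |x|) :
    tridiagToeplitz n a b * of (fun i k : Fin n => (-1) ^ ((i : ℕ) + (k : ℕ)) *
      ((U ℝ (min (i : ℤ) k)).eval x * (U ℝ (n - 1 - max (i : ℤ) k)).eval x) /
        (b * (U ℝ n).eval x)) = 1 := by
  set p : ℤ → ℝ := fun m => (-1) ^ m * (U ℝ m).eval x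
  set q : ℤ → ℝ := fun m => (-1) ^ m * (U ℝ (n - 1 - m)).eval x
  have hp : IsThreeTermSolution a b p :=
    isThreeTermSolution_negOnePow_mul ha (eval_U_sub_one_add_eval_U_add_one x)
  have hq : IsThreeTermSolution a b q := isThreeTermSolution_negOnePow_mul ha fun m => by
    rw [add_comm, show (n : ℤ) - 1 - (m + 1) = n - 1 - m - 1 by ring,
      show (n : ℤ) - 1 - (m - 1) = n - 1 - m + 1 by ring]
    exact eval_U_sub_one_add_eval_U_add_one x _
  have hC : casoratian p q (-1) = (U ℝ n).eval x := by simp [casoratian, p, q]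
  convert tridiagToeplitz_mul_greenKernel (n := n) hb hp hq (by simp [p]) (by simp [q])
    (hC ▸ eval_U_real_ne_zero hx n) using 2
  ext i k
  rw [of_apply, of_apply, hC, greenKernel, mul_mul_mul_comm, ← zpow_add₀ (by norm_num),
    min_add_max]
  norm_cast

theorem explicit_inverse_chebyshev_general (n : ℕ) (a b : ℝ) (hb : b ≠ 0)
    (hab : 2 * |b| < |a|) (T : Matrix (Fin n) (Fin n) ℝ)
    (hT : T = tridiagToeplitz n a b) :
    IsUnit T.det ∧
      ∀ i j : Fin n,
        T⁻¹ i j =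
          if (i : ℕ) ≤ (j : ℕ) then
            (-1 : ℝ) ^ (((i : ℕ) + 1) + ((j : ℕ) + 1)) * (1 / b) *
              ((Polynomial.Chebyshev.U ℝ (((i : ℕ) + 1 : ℤ) - 1)).eval (a / (2 * b)) *
                (Polynomial.Chebyshev.U ℝ ((n : ℤ) - ((j : ℕ) + 1 : ℤ))).eval (a / (2 * b)) /
                (Polynomial.Chebyshev.U ℝ (n : ℤ)).eval (a / (2 * b)))
          else
            (-1 : ℝ) ^ (((i : ℕ) + 1) + ((j : ℕ) + 1)) * (1 / b) *
              ((Polynomial.Chebyshev.U ℝ (((j : ℕ) + 1 : ℤ) - 1)).eval (a / (2 * b)) *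
                (Polynomial.Chebyshev.U ℝ ((n : ℤ) - ((i : ℕ) + 1 : ℤ))).eval (a / (2 * b)) /
                (Polynomial.Chebyshev.U ℝ (n : ℤ)).eval (a / (2 * b))) := by
  have hx : 1 < |a / (2 * b)| := by
    rwa [abs_div, abs_mul, abs_two, one_lt_div (by positivity)]
  have hTS := hT ▸ tridiagToeplitz_mul_chebyshev (n := n) hb (by field_simp) hx
  refine ⟨isUnit_det_of_right_inverse hTS, fun i j => ?_⟩
  rw [inv_eq_right_inv hTS, of_apply]
  split_ifs with hij
  · rw [min_eq_left (by omega), max_eq_right (by omega), add_sub_cancel_right,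
      show (n : ℤ) - ((j : ℕ) + 1 : ℤ) = n - 1 - j by ring]
    ring
  · rw [min_eq_right (by omega), max_eq_left (by omega), add_sub_cancel_right,
      show (n : ℤ) - ((i : ℕ) + 1 : ℤ) = n - 1 - i by ring]
    ring

/-- explicit inverse of the symmetric tridiagonal Toeplitz matrix in terms
of Chebyshev polynomials of the second kind (entry `(i, j)` of `T⁻¹` corresponds to the
1-based entry `(i+1, j+1)`). -/
theorem explicit_inverse_chebyshev (n : ℕ) (hn : 1 ≤ n) (a b : ℝ) (hb : b ≠ 0)
    (hab : 2 * |b| < |a|) (T : Matrix (Fin n) (Fin n) ℝ)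
    (hT : T = tridiagToeplitz n a b) :
    IsUnit T.det ∧
      ∀ i j : Fin n,
        T⁻¹ i j =
          if (i : ℕ) ≤ (j : ℕ) then
            (-1 : ℝ) ^ (((i : ℕ) + 1) + ((j : ℕ) + 1)) * (1 / b) *
              ((Polynomial.Chebyshev.U ℝ (((i : ℕ) + 1 : ℤ) - 1)).eval (a / (2 * b)) *
                (Polynomial.Chebyshev.U ℝ ((n : ℤ) - ((j : ℕ) + 1 : ℤ))).eval (a / (2 * b)) /
                (Polynomial.Chebyshev.U ℝ (n : ℤ)).eval (a / (2 * b)))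
          else
            (-1 : ℝ) ^ (((i : ℕ) + 1) + ((j : ℕ) + 1)) * (1 / b) *
              ((Polynomial.Chebyshev.U ℝ (((j : ℕ) + 1 : ℤ) - 1)).eval (a / (2 * b)) *
                (Polynomial.Chebyshev.U ℝ ((n : ℤ) - ((i : ℕ) + 1 : ℤ))).eval (a / (2 * b)) /
                (Polynomial.Chebyshev.U ℝ (n : ℤ)).eval (a / (2 * b))) :=
  explicit_inverse_chebyshev_general n a b hb hab T hT
end

section
/- Let n ≥ 1 and let T be the n×n symmetric tridiagonal Toeplitz matrix with diagonal a and off-diagonals b, where b ≠ 0 and |a| > 2|b|. Then for all indices 1 ≤ i ≤ j ≤ n, (T^{-1})_{ij} = (−1)^{i+j} (1/τ) · (r_+^{n+i−j+1} − r_+^{n−i−j+1} − r_+^{−n+i+j−1} + r_+^{−n−i+j−1}) / (r_+^{n+1} − r_+^{−n−1}), where all powers of r_+ are integer powers. -/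
noncomputable def gg (r : ℝ) (k : ℕ) : ℝ := r ^ k - r⁻¹ ^ k

lemma gg_zero (r : ℝ) : gg r 0 = 0 := by simp [gg]

lemma gg_rec (r : ℝ) (hr : r ≠ 0) (k : ℕ) :
    gg r (k + 2) = (r + r⁻¹) * gg r (k + 1) - gg r k := by
  have hrs : r * r⁻¹ = 1 := mul_inv_cancel₀ hr
  simp only [gg]
  linear_combination (r⁻¹ ^ k - r ^ k) * hrs

lemma gg_cross (r : ℝ) (hr : r ≠ 0) (k m : ℕ) :
    gg r (k + 2) * gg r (m + 1) - gg r (k + 1) * gg r m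
      = (r - r⁻¹) * gg r (k + m + 2) := by
  have hrs : r * r⁻¹ = 1 := mul_inv_cancel₀ hr
  simp only [gg]
  linear_combination (r ^ (k + m + 1) + r⁻¹ ^ (k + m + 1)
      - r ^ (k + 1) * r⁻¹ ^ m - r⁻¹ ^ (k + 1) * r ^ m) * hrs

lemma gg_ne (r : ℝ) (habs : 1 < |r|) (m : ℕ) (hm : 1 ≤ m) : gg r m ≠ 0 := by
  have hr0 : r ≠ 0 := by intro h; rw [h, abs_zero] at habs; linarith
  have h1 : |r⁻¹| ^ m < 1 := by
    apply pow_lt_one₀ (abs_nonneg _)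
    · rw [abs_inv]; exact inv_lt_one_of_one_lt₀ habs
    · omega
  have h2 : 1 < |r| ^ m := one_lt_pow₀ habs (by omega)
  intro h
  have : r ^ m = r⁻¹ ^ m := by unfold gg at h; linarith [sub_eq_zero.mp h]
  have := congrArg abs this
  rw [abs_pow, abs_pow] at this
  linarith [this]


noncomputable def Minv (n : ℕ) (b r : ℝ) : Matrix (Fin n) (Fin n) ℝ :=
  Matrix.of fun i j =>
    (-1 : ℝ) ^ ((i : ℕ) + (j : ℕ)) * gg r (min (i : ℕ) (j : ℕ) + 1)
      * gg r (n - max (i : ℕ) (j : ℕ)) / (b * (r - r⁻¹) * gg r (n + 1))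

lemma sum_if_eq {n : ℕ} (m : ℕ) (f : Fin n → ℝ) :
    (∑ j : Fin n, if (j : ℕ) = m then f j else 0)
      = if h : m < n then f ⟨m, h⟩ else 0 := by
  split_ifs with h
  · rw [Finset.sum_eq_single (⟨m, h⟩ : Fin n)]
    · simp
    · intro j _ hj; rw [if_neg]; exact fun hc => hj (Fin.ext hc)
    · simp
  · exact Finset.sum_eq_zero fun j _ => if_neg (by intro hc; exact h (hc ▸ j.isLt))

lemma Loff (a b r : ℝ) (hr : r ≠ 0) (ha : a = b * (r + r⁻¹)) (p : ℕ) :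
    a * gg r (p + 1) - b * gg r p - b * gg r (p + 2) = 0 := by
  linear_combination (gg r (p + 1)) * ha - b * gg_rec r hr p

lemma Ldiag (a b r : ℝ) (hr : r ≠ 0) (ha : a = b * (r + r⁻¹)) (p q : ℕ) :
    a * gg r (p + 1) * gg r (q + 1) - b * gg r p * gg r (q + 1) - b * gg r (p + 1) * gg r q
      = b * (r - r⁻¹) * gg r (p + q + 2) := by
  linear_combination (gg r (p + 1) * gg r (q + 1)) * ha - (b * gg r (q + 1)) * (gg_rec r hr p)
    + b * (gg_cross r hr p q)

lemma mul_Minv (n : ℕ) (a b r : ℝ) (hb : b ≠ 0) (hr : r ≠ 0)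
    (habs : 1 < |r|) (ha : a = b * (r + r⁻¹)) :
    tridiagToeplitz n a b * Minv n b r = 1 := by
  have hgg1 : r - r⁻¹ ≠ 0 := by
    have := gg_ne r habs 1 le_rfl; simpa [gg] using this
  have hD : b * (r - r⁻¹) * gg r (n + 1) ≠ 0 :=
    mul_ne_zero (mul_ne_zero hb hgg1) (gg_ne r habs (n + 1) (by omega))
  have hDD : (b * (r - r⁻¹) * gg r (n + 1)) * (b * (r - r⁻¹) * gg r (n + 1))⁻¹ = 1 :=
    mul_inv_cancel₀ hD
  ext i k
  rw [Matrix.mul_apply, Matrix.one_apply]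
  have hsplit : ∀ j : Fin n, tridiagToeplitz n a b i j * Minv n b r j k
      = ((if (j : ℕ) = (i : ℕ) then a * Minv n b r j k else 0)
        + (if (j : ℕ) = (i : ℕ) + 1 then b * Minv n b r j k else 0))
        + (if (j : ℕ) + 1 = (i : ℕ) then b * Minv n b r j k else 0) := by
    intro j
    simp only [tridiagToeplitz, Matrix.of_apply]
    split_ifs <;> (try (exfalso; omega)) <;> ring
  rw [Finset.sum_congr rfl fun j _ => hsplit j, Finset.sum_add_distrib,
    Finset.sum_add_distrib, sum_if_eq, sum_if_eq, dif_pos i.isLt]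
  simp only [Fin.eta]
  have hK : (k : ℕ) < n := k.isLt
  have hI : (i : ℕ) < n := i.isLt
  rcases Nat.eq_zero_or_pos (i : ℕ) with hi0 | hip
  · have h3 : ∀ j : Fin n, (if (j : ℕ) + 1 = (i : ℕ) then b * Minv n b r j k else 0) = 0 :=
      fun j => if_neg (by omega)
    simp only [h3, Finset.sum_const_zero, add_zero]
    rcases Nat.lt_or_ge ((i : ℕ) + 1) n with h2 | h2
    · rw [dif_pos h2]
      rcases eq_or_ne i k with heq | hne
      · -- B: i = k = 0, n ≥ 2
        have hk0 : (k : ℕ) = 0 := by rw [← heq]; omega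
        rw [if_pos heq]
        obtain ⟨m, hm⟩ : ∃ m, n = m + 2 := ⟨n - 2, by omega⟩
        have key : a * gg r (0 + 1) * gg r ((m + 1) + 1) - b * gg r 0 * gg r ((m + 1) + 1)
            - b * gg r (0 + 1) * gg r (m + 1) = b * (r - r⁻¹) * gg r (n + 1) := by
          rw [show n + 1 = 0 + (m + 1) + 2 by omega]
          exact Ldiag a b r hr ha 0 (m + 1)
        simp only [Minv, Matrix.of_apply, Fin.eta]
        rw [show min (i : ℕ) (k : ℕ) + 1 = 0 + 1 by omega,
          show n - max (i : ℕ) (k : ℕ) = (m + 1) + 1 by omega,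
          show min ((i : ℕ) + 1) (k : ℕ) + 1 = 0 + 1 by omega,
          show n - max ((i : ℕ) + 1) (k : ℕ) = m + 1 by omega,
          show (i : ℕ) + (k : ℕ) = 0 by omega,
          show (i : ℕ) + 1 + (k : ℕ) = 1 by omega]
        linear_combination (b * (r - r⁻¹) * gg r (n + 1))⁻¹ * key + hDD
          + (b * gg r ((m + 1) + 1) * (b * (r - r⁻¹) * gg r (n + 1))⁻¹) * gg_zero r
      · -- C: i = 0 < k
        have hk1 : 1 ≤ (k : ℕ) := by
          rcases Nat.eq_zero_or_pos (k : ℕ) with h | h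
          · exact absurd (Fin.ext (by omega) : i = k) hne
          · exact h
        rw [if_neg hne]
        simp only [Minv, Matrix.of_apply, Fin.eta]
        rw [show min (i : ℕ) (k : ℕ) + 1 = 0 + 1 by omega,
          show min ((i : ℕ) + 1) (k : ℕ) + 1 = 0 + 2 by omega,
          show n - max (i : ℕ) (k : ℕ) = n - (k : ℕ) by omega,
          show n - max ((i : ℕ) + 1) (k : ℕ) = n - (k : ℕ) by omega,
          show (i : ℕ) + (k : ℕ) = (k : ℕ) by omega,
          show (i : ℕ) + 1 + (k : ℕ) = (k : ℕ) + 1 by omega]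
        linear_combination ((-1 : ℝ) ^ (k : ℕ) * gg r (n - (k : ℕ)) * (b * (r - r⁻¹) * gg r (n + 1))⁻¹) * Loff a b r hr ha 0
          + ((-1 : ℝ) ^ (k : ℕ) * b * gg r (n - (k : ℕ)) * (b * (r - r⁻¹) * gg r (n + 1))⁻¹) * gg_zero r
    · -- A: n = 1, i = k = 0
      have heq : i = k := Fin.ext (by omega)
      rw [dif_neg (by omega), if_pos heq, add_zero]
      have key : a * gg r (0 + 1) * gg r (0 + 1) - b * gg r 0 * gg r (0 + 1)
          - b * gg r (0 + 1) * gg r 0 = b * (r - r⁻¹) * gg r (n + 1) := by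
        rw [show n + 1 = 0 + 0 + 2 by omega]
        exact Ldiag a b r hr ha 0 0
      simp only [Minv, Matrix.of_apply]
      rw [show min (i : ℕ) (k : ℕ) + 1 = 0 + 1 by omega,
        show n - max (i : ℕ) (k : ℕ) = 0 + 1 by omega,
        show (i : ℕ) + (k : ℕ) = 0 by omega]
      linear_combination (b * (r - r⁻¹) * gg r (n + 1))⁻¹ * key + hDD
        + (2 * b * gg r (0 + 1) * (b * (r - r⁻¹) * gg r (n + 1))⁻¹) * gg_zero r
  · obtain ⟨i', hI'⟩ : ∃ i', (i : ℕ) = i' + 1 := ⟨(i : ℕ) - 1, by omega⟩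
    have h3 : ∀ j : Fin n, ((j : ℕ) + 1 = (i : ℕ)) = ((j : ℕ) = i') :=
      fun j => propext (by omega)
    simp only [h3]
    rw [sum_if_eq, dif_pos (show i' < n by omega)]
    rcases lt_trichotomy (i : ℕ) (k : ℕ) with hlt | heq' | hgt
    · -- D1: 0 < i < k
      rw [dif_pos (show (i : ℕ) + 1 < n by omega),
        if_neg (show i ≠ k from fun h => by subst h; omega)]
      simp only [Minv, Matrix.of_apply, Fin.eta]
      rw [show min (i : ℕ) (k : ℕ) + 1 = i' + 1 + 1 by omega,
        show min ((i : ℕ) + 1) (k : ℕ) + 1 = i' + 1 + 2 by omega,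
        show min i' (k : ℕ) + 1 = i' + 1 by omega,
        show n - max (i : ℕ) (k : ℕ) = n - (k : ℕ) by omega,
        show n - max ((i : ℕ) + 1) (k : ℕ) = n - (k : ℕ) by omega,
        show n - max i' (k : ℕ) = n - (k : ℕ) by omega,
        show (i : ℕ) + (k : ℕ) = i' + (k : ℕ) + 1 by omega,
        show (i : ℕ) + 1 + (k : ℕ) = i' + (k : ℕ) + 2 by omega]
      linear_combination ((-1 : ℝ) ^ (i' + (k : ℕ) + 1) * gg r (n - (k : ℕ)) * (b * (r - r⁻¹) * gg r (n + 1))⁻¹)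
        * Loff a b r hr ha (i' + 1)
    · -- D2: i = k ≥ 1
      have heq : i = k := Fin.ext heq'
      rw [if_pos heq]
      rcases Nat.lt_or_ge ((i : ℕ) + 1) n with h2 | h2
      · -- D2a
        rw [dif_pos h2]
        obtain ⟨q, hq⟩ : ∃ q, n = (k : ℕ) + q + 1 := ⟨n - (k : ℕ) - 1, by omega⟩
        have key : a * gg r ((k : ℕ) + 1) * gg r (q + 1) - b * gg r (k : ℕ) * gg r (q + 1)
            - b * gg r ((k : ℕ) + 1) * gg r q = b * (r - r⁻¹) * gg r (n + 1) := by
          rw [show n + 1 = (k : ℕ) + q + 2 by omega]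
          exact Ldiag a b r hr ha (k : ℕ) q
        simp only [Minv, Matrix.of_apply, Fin.eta]
        rw [show min (i : ℕ) (k : ℕ) + 1 = (k : ℕ) + 1 by omega,
          show min ((i : ℕ) + 1) (k : ℕ) + 1 = (k : ℕ) + 1 by omega,
          show min i' (k : ℕ) + 1 = (k : ℕ) by omega,
          show n - max (i : ℕ) (k : ℕ) = q + 1 by omega,
          show n - max ((i : ℕ) + 1) (k : ℕ) = q by omega,
          show n - max i' (k : ℕ) = q + 1 by omega,
          show ((-1 : ℝ)) ^ ((i : ℕ) + (k : ℕ)) = 1 from Even.neg_one_pow ⟨(k : ℕ), by omega⟩,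
          show ((-1 : ℝ)) ^ ((i : ℕ) + 1 + (k : ℕ)) = -1 from Odd.neg_one_pow ⟨(k : ℕ), by omega⟩,
          show ((-1 : ℝ)) ^ (i' + (k : ℕ)) = -1 from Odd.neg_one_pow ⟨i', by omega⟩]
        linear_combination (b * (r - r⁻¹) * gg r (n + 1))⁻¹ * key + hDD
      · -- D2b: i = k = n - 1
        rw [dif_neg (by omega)]
        have key : a * gg r ((k : ℕ) + 1) * gg r (0 + 1) - b * gg r (k : ℕ) * gg r (0 + 1)
            - b * gg r ((k : ℕ) + 1) * gg r 0 = b * (r - r⁻¹) * gg r (n + 1) := by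
          rw [show n + 1 = (k : ℕ) + 0 + 2 by omega]
          exact Ldiag a b r hr ha (k : ℕ) 0
        simp only [Minv, Matrix.of_apply, Fin.eta]
        rw [show min (i : ℕ) (k : ℕ) + 1 = (k : ℕ) + 1 by omega,
          show min i' (k : ℕ) + 1 = (k : ℕ) by omega,
          show n - max (i : ℕ) (k : ℕ) = 0 + 1 by omega,
          show n - max i' (k : ℕ) = 0 + 1 by omega,
          show ((-1 : ℝ)) ^ ((i : ℕ) + (k : ℕ)) = 1 from Even.neg_one_pow ⟨(k : ℕ), by omega⟩,
          show ((-1 : ℝ)) ^ (i' + (k : ℕ)) = -1 from Odd.neg_one_pow ⟨i', by omega⟩]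
        linear_combination (b * (r - r⁻¹) * gg r (n + 1))⁻¹ * key + hDD + (b * gg r ((k : ℕ) + 1) * (b * (r - r⁻¹) * gg r (n + 1))⁻¹) * gg_zero r
    · -- D3: k < i
      rw [if_neg (show i ≠ k from fun h => by subst h; omega)]
      rcases Nat.lt_or_ge ((i : ℕ) + 1) n with h2 | h2
      · -- D3a
        rw [dif_pos h2]
        obtain ⟨m, hm⟩ : ∃ m, n = (i : ℕ) + m + 2 := ⟨n - (i : ℕ) - 2, by omega⟩
        simp only [Minv, Matrix.of_apply, Fin.eta]
        rw [show min (i : ℕ) (k : ℕ) + 1 = (k : ℕ) + 1 by omega,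
          show min ((i : ℕ) + 1) (k : ℕ) + 1 = (k : ℕ) + 1 by omega,
          show min i' (k : ℕ) + 1 = (k : ℕ) + 1 by omega,
          show n - max (i : ℕ) (k : ℕ) = m + 1 + 1 by omega,
          show n - max ((i : ℕ) + 1) (k : ℕ) = m + 1 by omega,
          show n - max i' (k : ℕ) = m + 1 + 2 by omega,
          show (i : ℕ) + (k : ℕ) = i' + (k : ℕ) + 1 by omega,
          show (i : ℕ) + 1 + (k : ℕ) = i' + (k : ℕ) + 2 by omega]
        linear_combination ((-1 : ℝ) ^ (i' + (k : ℕ) + 1) * gg r ((k : ℕ) + 1) * (b * (r - r⁻¹) * gg r (n + 1))⁻¹)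
          * Loff a b r hr ha (m + 1)
      · -- D3b: i = n - 1 > k
        rw [dif_neg (by omega)]
        simp only [Minv, Matrix.of_apply, Fin.eta]
        rw [show min (i : ℕ) (k : ℕ) + 1 = (k : ℕ) + 1 by omega,
          show min i' (k : ℕ) + 1 = (k : ℕ) + 1 by omega,
          show n - max (i : ℕ) (k : ℕ) = 0 + 1 by omega,
          show n - max i' (k : ℕ) = 0 + 2 by omega,
          show (i : ℕ) + (k : ℕ) = i' + (k : ℕ) + 1 by omega]
        linear_combination ((-1 : ℝ) ^ (i' + (k : ℕ) + 1) * gg r ((k : ℕ) + 1) * (b * (r - r⁻¹) * gg r (n + 1))⁻¹)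
          * Loff a b r hr ha 0
          + ((-1 : ℝ) ^ (i' + (k : ℕ) + 1) * b * gg r ((k : ℕ) + 1) * (b * (r - r⁻¹) * gg r (n + 1))⁻¹) * gg_zero r

set_option maxHeartbeats 1600000 in
/-- explicit inverse formula in terms of integer powers of the root `r₊`
of `r² - 2xr + 1 = 0` of modulus `> 1`, where `x = a/(2b)`.  Entry `(i, j)` of `T⁻¹`
corresponds to the 1-based entry `(i+1, j+1)`. -/
theorem explicit_inverse_powers (n : ℕ) (hn : 1 ≤ n) (a b : ℝ) (hb : b ≠ 0)
    (hab : 2 * |b| < |a|) (T : Matrix (Fin n) (Fin n) ℝ)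
    (hT : T = tridiagToeplitz n a b)
    (x : ℝ) (hx : x = a / (2 * b))
    (rp rm : ℝ)
    (hrp : rp = x + Real.sqrt (x ^ 2 - 1) ∨ rp = x - Real.sqrt (x ^ 2 - 1))
    (hrm : rm = x + Real.sqrt (x ^ 2 - 1) ∨ rm = x - Real.sqrt (x ^ 2 - 1))
    (hne : rp ≠ rm) (habs : 1 < |rp|)
    (τ : ℝ) (hτ : τ = b * (rp - rm)) :
    ∀ i j : Fin n, (i : ℕ) ≤ (j : ℕ) →
      T⁻¹ i j =
        (-1 : ℝ) ^ (((i : ℕ) + 1) + ((j : ℕ) + 1)) * (1 / τ) *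
          ((rp ^ ((n : ℤ) + ((i : ℕ) + 1) - ((j : ℕ) + 1) + 1)
              - rp ^ ((n : ℤ) - ((i : ℕ) + 1) - ((j : ℕ) + 1) + 1)
              - rp ^ (-(n : ℤ) + ((i : ℕ) + 1) + ((j : ℕ) + 1) - 1)
              + rp ^ (-(n : ℤ) - ((i : ℕ) + 1) + ((j : ℕ) + 1) - 1))
            / (rp ^ ((n : ℤ) + 1) - rp ^ (-(n : ℤ) - 1))) := by
  have hx1 : 1 < |x| := by
    rw [hx, abs_div, abs_mul, abs_two]
    rw [lt_div_iff₀ (by positivity)]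
    linarith
  have hx2 : 0 < x ^ 2 - 1 := by nlinarith [sq_abs x]
  have hsq : Real.sqrt (x ^ 2 - 1) ^ 2 = x ^ 2 - 1 := Real.sq_sqrt hx2.le
  have hkey : rp + rm = 2 * x ∧ rp * rm = 1 := by
    rcases hrp with h1 | h1 <;> rcases hrm with h2 | h2
    · exact absurd (h1.trans h2.symm) hne
    · exact ⟨by rw [h1, h2]; ring, by rw [h1, h2]; linear_combination -hsq⟩
    · exact ⟨by rw [h1, h2]; ring, by rw [h1, h2]; linear_combination -hsq⟩
    · exact absurd (h1.trans h2.symm) hne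
  obtain ⟨hsum, hprod⟩ := hkey
  have hrp0 : rp ≠ 0 := by intro h; rw [h, zero_mul] at hprod; exact zero_ne_one hprod
  have hrm_eq : rm = rp⁻¹ := (inv_eq_of_mul_eq_one_right hprod).symm
  have ha : a = b * (rp + rp⁻¹) := by
    rw [← hrm_eq, hsum, hx]; field_simp
  have hTM : T * Minv n b rp = 1 := by rw [hT]; exact mul_Minv n a b rp hb hrp0 habs ha
  have hinv : T⁻¹ = Minv n b rp := Matrix.inv_eq_right_inv hTM
  intro i j hij
  rw [hinv]
  simp only [Minv, Matrix.of_apply]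
  obtain ⟨m, hm⟩ : ∃ m, n = (j : ℕ) + m + 1 := ⟨n - (j : ℕ) - 1, by omega⟩
  have hz : ∀ p q : ℕ, rp ^ ((p : ℤ) - (q : ℤ)) = rp ^ p * rp⁻¹ ^ q := fun p q => by
    rw [zpow_sub₀ hrp0, zpow_natCast, zpow_natCast, div_eq_mul_inv, inv_pow]
  rw [show (n : ℤ) + ((i : ℕ) + 1) - ((j : ℕ) + 1) + 1
        = ((((i : ℕ) + 1 + (m + 1) : ℕ)) : ℤ) - ((0 : ℕ) : ℤ) from by push_cast; omega,
    show (n : ℤ) - ((i : ℕ) + 1) - ((j : ℕ) + 1) + 1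
        = ((m + 1 : ℕ) : ℤ) - (((i : ℕ) + 1 : ℕ) : ℤ) from by push_cast; omega,
    show -(n : ℤ) + ((i : ℕ) + 1) + ((j : ℕ) + 1) - 1
        = (((i : ℕ) + 1 : ℕ) : ℤ) - ((m + 1 : ℕ) : ℤ) from by push_cast; omega,
    show -(n : ℤ) - ((i : ℕ) + 1) + ((j : ℕ) + 1) - 1
        = ((0 : ℕ) : ℤ) - ((((i : ℕ) + 1 + (m + 1) : ℕ)) : ℤ) from by push_cast; omega,
    show (n : ℤ) + 1 = ((n + 1 : ℕ) : ℤ) - ((0 : ℕ) : ℤ) from by push_cast; omega,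
    show -(n : ℤ) - 1 = ((0 : ℕ) : ℤ) - ((n + 1 : ℕ) : ℤ) from by push_cast; omega]
  simp only [hz]
  rw [show (i : ℕ) ⊓ (j : ℕ) + 1 = (i : ℕ) + 1 by omega,
    show n - (i : ℕ) ⊔ (j : ℕ) = m + 1 by omega, hτ, hrm_eq]
  have hd1 : rp ^ (n + 1) - rp⁻¹ ^ (n + 1) ≠ 0 := by
    have := gg_ne rp habs (n + 1) (by omega); simpa [gg] using this
  have hd2 : rp - rp⁻¹ ≠ 0 := by
    have := gg_ne rp habs 1 le_rfl; simpa [gg] using this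
  have hGne : gg rp (n + 1) ≠ 0 := gg_ne rp habs (n + 1) (by omega)
  rw [show rp ^ ((i : ℕ) + 1 + (m + 1)) * rp⁻¹ ^ 0 - rp ^ (m + 1) * rp⁻¹ ^ ((i : ℕ) + 1)
        - rp ^ ((i : ℕ) + 1) * rp⁻¹ ^ (m + 1) + rp ^ 0 * rp⁻¹ ^ ((i : ℕ) + 1 + (m + 1))
        = gg rp ((i : ℕ) + 1) * gg rp (m + 1) from by simp only [gg]; ring,
    show rp ^ (n + 1) * rp⁻¹ ^ 0 - rp ^ 0 * rp⁻¹ ^ (n + 1) = gg rp (n + 1) from by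
      simp only [gg]; ring]
  field_simp
  ring
end

section
/- Let k ≥ 10 be a natural number, N = ⌈k/φ⌉, and let n ≥ N and 1 ≤ i ≤ j ≤ n with i ≥ ⌈n/2⌉. Then |(r_+^{i−j} − r_+^{−i−j} − r_+^{−2(n+1)+i+j} + r_+^{−2(n+1)−i+j}) / (τ (r_+^{2(n+1)} − 1))| < |r_+^{−n}/τ|. -/
lemma abs_zpow' (x : ℝ) (e : ℤ) : |x ^ e| = |x| ^ e := by
  rcases e with m | m
  · simp [abs_pow]
  · simp [zpow_negSucc, abs_inv, abs_pow]

set_option maxHeartbeats 1000000 in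
/-- bound `ξ₁ < |r₊^(-n)/τ|` from the proof of Lemma 1. -/
theorem xi_one_bound (rp τ : ℝ) (hrp : 1 < |rp|) (hτ : τ ≠ 0)
    (φ : ℝ) (hφ : φ = Real.logb 2 |rp|)
    (k : ℕ) (hk : 10 ≤ k) (N : ℕ) (hN : N = ⌈(k : ℝ) / φ⌉₊)
    (n i j : ℕ) (hn : N ≤ n) (hi : 1 ≤ i) (hij : i ≤ j) (hj : j ≤ n)
    (hhalf : ⌈(n : ℝ) / 2⌉₊ ≤ i) :
    |(rp ^ ((i : ℤ) - (j : ℤ)) - rp ^ (-(i : ℤ) - (j : ℤ))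
        - rp ^ (-2 * ((n : ℤ) + 1) + (i : ℤ) + (j : ℤ))
        + rp ^ (-2 * ((n : ℤ) + 1) - (i : ℤ) + (j : ℤ)))
      / (τ * (rp ^ (2 * ((n : ℤ) + 1)) - 1))|
    < |rp ^ (-(n : ℤ)) / τ| := by
  set A := |rp| with hA
  have ha : (1:ℝ) < A := hrp
  have ha0 : (0:ℝ) < A := lt_trans one_pos ha
  have hτ' : (0:ℝ) < |τ| := abs_pos.mpr hτ
  have hφpos : 0 < φ := by rw [hφ]; exact Real.logb_pos one_lt_two ha
  have hkn : (k:ℝ) ≤ (n:ℝ) * φ := by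
    have h1 : (k:ℝ)/φ ≤ (N:ℝ) := by
      rw [hN]; exact Nat.le_ceil _
    have h2 : (N:ℝ) ≤ (n:ℝ) := by exact_mod_cast hn
    rw [div_le_iff₀ hφpos] at h1
    nlinarith
  have han : (1024:ℝ) ≤ A ^ (n:ℤ) := by
    have hAeq : A = (2:ℝ) ^ φ := by
      rw [hφ]; exact (Real.rpow_logb two_pos (by norm_num) ha0).symm
    have h2 : A ^ (n:ℝ) = (2:ℝ) ^ (φ * n) := by
      rw [hAeq, ← Real.rpow_mul (by norm_num)]
    have h3 : (2:ℝ)^(k:ℝ) ≤ (2:ℝ) ^ (φ * n) :=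
      Real.rpow_le_rpow_of_exponent_le one_le_two (by nlinarith)
    have h4 : (1024:ℝ) ≤ (2:ℝ)^(k:ℝ) := by
      have : (2:ℝ)^(10:ℝ) ≤ (2:ℝ)^(k:ℝ) :=
        Real.rpow_le_rpow_of_exponent_le one_le_two (by exact_mod_cast hk)
      have h10 : (2:ℝ)^(10:ℝ) = 1024 := by
        rw [show (10:ℝ) = ((10:ℕ):ℝ) by norm_num, Real.rpow_natCast]; norm_num
      linarith
    have h5 : (1024:ℝ) ≤ A ^ (n:ℝ) := by rw [h2]; linarith
    rwa [Real.rpow_natCast, ← zpow_natCast] at h5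
  -- denominator positivity and evenness
  have hDeq : rp ^ (2*((n:ℤ)+1)) = A ^ (2*((n:ℤ)+1)) := by
    have he : Even (2*((n:ℤ)+1)) := even_two_mul _
    rw [hA, ← abs_zpow' rp]
    exact (abs_of_nonneg (he.zpow_nonneg rp)).symm
  have hAm1 : (1:ℝ) ≤ A ^ (2*((n:ℤ)+1)) := one_le_zpow₀ ha.le (by positivity)
  have hAmbig : (1024:ℝ) * A * A ≤ A ^ (2*((n:ℤ)+1)) * A ^ (-(n:ℤ)) := by
    have : A ^ (2*((n:ℤ)+1)) * A ^ (-(n:ℤ)) = A ^ ((n:ℤ)) * (A * A) := by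
      rw [← zpow_add₀ (ne_of_gt ha0)]
      rw [show 2*((n:ℤ)+1) + -(n:ℤ) = (n:ℤ) + 1 + 1 by ring,
        zpow_add₀ (ne_of_gt ha0), zpow_add₀ (ne_of_gt ha0), zpow_one]
      ring
    rw [this]
    nlinarith
  have hAneg : A ^ (-(n:ℤ)) ≤ 1 := zpow_le_one_of_nonpos₀ ha.le (by omega)
  have hAnegpos : 0 < A ^ (-(n:ℤ)) := zpow_pos ha0 _
  -- bound on numerator terms
  have hterm : ∀ e : ℤ, e ≤ 0 → |rp ^ e| ≤ 1 := fun e he => by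
    rw [abs_zpow']; exact zpow_le_one_of_nonpos₀ ha.le he
  have t1 := abs_le.mp (hterm ((i:ℤ) - j) (by omega))
  have t2 := abs_le.mp (hterm (-(i:ℤ) - j) (by omega))
  have t3 := abs_le.mp (hterm (-2*((n:ℤ)+1) + i + j) (by omega))
  have t4 := abs_le.mp (hterm (-2*((n:ℤ)+1) - i + j) (by omega))
  have hX : |rp ^ ((i : ℤ) - (j : ℤ)) - rp ^ (-(i : ℤ) - (j : ℤ))
        - rp ^ (-2 * ((n : ℤ) + 1) + (i : ℤ) + (j : ℤ))
        + rp ^ (-2 * ((n : ℤ) + 1) - (i : ℤ) + (j : ℤ))| ≤ 4 := by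
    rw [abs_le]; constructor <;> linarith [t1.1, t1.2, t2.1, t2.2, t3.1, t3.2, t4.1, t4.2]
  -- key inequality
  have hkey : (4:ℝ) < A ^ (-(n:ℤ)) * (A ^ (2*((n:ℤ)+1)) - 1) := by
    have : A ^ (-(n:ℤ)) * (A ^ (2*((n:ℤ)+1)) - 1)
        = A ^ (2*((n:ℤ)+1)) * A ^ (-(n:ℤ)) - A ^ (-(n:ℤ)) := by ring
    rw [this]
    nlinarith
  -- assemble
  rw [abs_div, abs_div, abs_mul, hDeq, abs_zpow', abs_of_nonneg (by linarith : (0:ℝ) ≤ A ^ (2*((n:ℤ)+1)) - 1), ← hA]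
  rw [div_lt_div_iff₀ (by nlinarith) hτ']
  nlinarith [mul_lt_mul_of_pos_right (lt_of_le_of_lt hX hkey) hτ']
end

section
/- Let δ be a positive natural number and set α_δ = (δ − log₂|τ|)/φ. Then for all indices 1 ≤ i ≤ j ≤ n with i < ⌈n/2⌉ and 2i > α_δ, it holds that |(−1)^{i+j} (1/τ)(r_+^{i−j} − r_+^{−i−j}) − (−1)^{i+j} (1/τ) r_+^{i−j}| < 2^{−δ}; that is, in all but a constant number of rows (independent of n) the entries of the approximate inverse equal (−1)^{i+j} (1/τ) r_+^{i−j} to precision 2^{−δ}. -/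
/-- in rows with `2i > α_δ` (all but a constant number of rows,
independent of `n`), the entries of the approximate inverse with `i < ⌈n/2⌉` equal
`(-1)^(i+j) (1/τ) r^(i-j)` to precision `2^(-δ)`. -/
theorem rows_simplify_to_single_power (r τ : ℝ) (habs : 1 < |r|) (hτ : τ ≠ 0)
    (φ : ℝ) (hφ : φ = Real.logb 2 |r|)
    (δ : ℕ) (hδ : 1 ≤ δ) (α : ℝ) (hα : α = ((δ : ℝ) - Real.logb 2 |τ|) / φ) :
    ∀ n i j : ℕ, 1 ≤ n → 1 ≤ i → i ≤ j → j ≤ n → i < ⌈(n : ℝ) / 2⌉₊ →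
      α < 2 * (i : ℝ) →
      |(-1 : ℝ) ^ (i + j) * (1 / τ) *
            (r ^ ((i : ℤ) - (j : ℤ)) - r ^ (-(i : ℤ) - (j : ℤ)))
          - (-1 : ℝ) ^ (i + j) * (1 / τ) * r ^ ((i : ℤ) - (j : ℤ))|
        < (2 : ℝ) ^ (-(δ : ℤ)) := by
  intro n i j hn hi hij hjn hceil halt
  have hr0 : (0 : ℝ) < |r| := lt_trans one_pos habs
  have hr1 : (1 : ℝ) ≤ |r| := le_of_lt habs
  have hrne : r ≠ 0 := by
    intro h; rw [h, abs_zero] at habs; linarith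
  have hτa : (0 : ℝ) < |τ| := abs_pos.mpr hτ
  have hφpos : 0 < φ := by
    rw [hφ]; exact Real.logb_pos (by norm_num) habs
  -- key: 2^δ < |τ| * |r|^(2*i)
  have h1 : (δ : ℝ) - Real.logb 2 |τ| < 2 * i * φ := by
    rw [hα, div_lt_iff₀ hφpos] at halt; linarith
  have h2 : (δ : ℝ) < Real.logb 2 (|τ| * |r| ^ (2 * i)) := by
    rw [Real.logb_mul (ne_of_gt hτa) (by positivity), Real.logb_pow]
    rw [hφ] at h1
    push_cast
    linarith
  have h3 : (2 : ℝ) ^ (δ : ℝ) < |τ| * |r| ^ (2 * i) := by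
    rw [← Real.lt_logb_iff_rpow_lt (by norm_num) (by positivity)]
    exact h2
  have h3' : (2 : ℝ) ^ δ < |τ| * |r| ^ (2 * i) := by
    rwa [Real.rpow_natCast] at h3
  -- the difference simplifies
  have hdiff : |(-1 : ℝ) ^ (i + j) * (1 / τ) *
            (r ^ ((i : ℤ) - (j : ℤ)) - r ^ (-(i : ℤ) - (j : ℤ)))
          - (-1 : ℝ) ^ (i + j) * (1 / τ) * r ^ ((i : ℤ) - (j : ℤ))|
        = (|r| ^ (i + j))⁻¹ / |τ| := by
    have hre : r ^ (-(i : ℤ) - (j : ℤ)) = (r ^ (i + j))⁻¹ := by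
      rw [← zpow_natCast r (i + j), ← zpow_neg]
      congr 1
      push_cast
      ring
    have : (-1 : ℝ) ^ (i + j) * (1 / τ) *
            (r ^ ((i : ℤ) - (j : ℤ)) - r ^ (-(i : ℤ) - (j : ℤ)))
          - (-1 : ℝ) ^ (i + j) * (1 / τ) * r ^ ((i : ℤ) - (j : ℤ))
        = -((-1 : ℝ) ^ (i + j) * (1 / τ) * r ^ (-(i : ℤ) - (j : ℤ))) := by ring
    rw [this, hre, abs_neg, abs_mul, abs_mul, abs_pow, abs_neg, abs_one, one_pow,
      one_mul, abs_div, abs_one, abs_inv, abs_pow]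
    ring
  rw [hdiff]
  have hmono : |r| ^ (2 * i) ≤ |r| ^ (i + j) :=
    pow_le_pow_right₀ hr1 (by omega)
  have hpos2i : (0:ℝ) < |τ| * |r| ^ (2 * i) := by positivity
  have hposij : (0:ℝ) < |τ| * |r| ^ (i + j) := by positivity
  calc (|r| ^ (i + j))⁻¹ / |τ| = (|τ| * |r| ^ (i + j))⁻¹ := by
        rw [mul_inv]
        ring
    _ ≤ (|τ| * |r| ^ (2 * i))⁻¹ := by
        apply inv_anti₀ hpos2i
        exact mul_le_mul_of_nonneg_left hmono (le_of_lt hτa)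
    _ < ((2 : ℝ) ^ δ)⁻¹ := by
        apply inv_strictAnti₀ (by positivity) h3'
    _ = (2 : ℝ) ^ (-(δ : ℤ)) := by
        rw [zpow_neg, zpow_natCast]
end
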